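/- arXiv:2602.14273 — 2 statements merged into one kernel-verified Lean document; each statement's English description precedes it below -/
import Mathlib

section
/- With P_auto the digit-swap involution on {1,…,15} (τ(4a+b)=4b+a restricted away from 0) and H₄ = I + P₁₅ + P₁₅⁴ over F₂ (15×15), we have H₄ P_auto = P_auto H₄; consequently P_auto is a matrix automorphism of H₄ with row permutation ρ = P_auto. -/
set_option maxHeartbeats 1000000


open Matrix

/-- With P_auto the digit-swap involution on {1,…,15} and H₄ = I + P₁₅ + P₁₅⁴
over F₂, we have H₄·P_auto = P_auto·H₄; consequently P_auto is a matrix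
automorphism of H₄ with row permutation ρ = P_auto. -/
theorem digit_swap_matrix_automorphism
    (pa p : Equiv.Perm {i : Fin 16 // i ≠ 0})
    (hpa : ∀ x : {i : Fin 16 // i ≠ 0},
      ((pa x : {i : Fin 16 // i ≠ 0}) : Fin 16).val =
        4 * ((x : Fin 16).val % 4) + (x : Fin 16).val / 4)
    (hp : ∀ x : {i : Fin 16 // i ≠ 0},
      ((p x : {i : Fin 16 // i ≠ 0}) : Fin 16).val =
        if (x : Fin 16).val = 15 then 1 else (x : Fin 16).val + 1) :
    (1 + p.permMatrix (ZMod 2) + (p.permMatrix (ZMod 2)) ^ 4) *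
        pa.permMatrix (ZMod 2) =
      pa.permMatrix (ZMod 2) *
        (1 + p.permMatrix (ZMod 2) + (p.permMatrix (ZMod 2)) ^ 4) ∧
    ∃ ρ : Equiv.Perm {i : Fin 16 // i ≠ 0},
      (1 + p.permMatrix (ZMod 2) + (p.permMatrix (ZMod 2)) ^ 4) *
          pa.permMatrix (ZMod 2) =
        ρ.permMatrix (ZMod 2) *
          (1 + p.permMatrix (ZMod 2) + (p.permMatrix (ZMod 2)) ^ 4) := by
  -- key permutation identities
  have hval : ∀ x : {i : Fin 16 // i ≠ 0},
      1 ≤ ((x : Fin 16)).val ∧ ((x : Fin 16)).val < 16 := by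
    intro x
    refine ⟨?_, (x : Fin 16).isLt⟩
    rcases Nat.eq_zero_or_pos (x : Fin 16).val with h | h
    · exact absurd (Fin.ext h) x.2
    · exact h
  have hpa2 : ∀ x, pa (pa x) = x := by
    intro x
    apply Subtype.ext; apply Fin.ext
    show ((pa (pa x) : {i : Fin 16 // i ≠ 0}) : Fin 16).val = _
    rw [hpa, hpa]
    obtain ⟨h1, h2⟩ := hval x
    set m := ((x : Fin 16)).val with hm
    interval_cases m <;> rfl
  have key : ∀ x, pa (p (pa x)) = (p ^ 4) x := by
    intro x
    apply Subtype.ext; apply Fin.ext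
    have h4 : (p ^ 4) x = p (p (p (p x))) := by
      simp [pow_succ, Equiv.Perm.mul_apply]
    rw [h4]
    show ((pa (p (pa x)) : {i : Fin 16 // i ≠ 0}) : Fin 16).val = _
    rw [hpa, hp, hpa, hp, hp, hp, hp]
    obtain ⟨h1, h2⟩ := hval x
    set m := ((x : Fin 16)).val with hm
    interval_cases m <;> rfl
  -- as permutations
  have hpa2' : pa * pa = 1 := Equiv.ext hpa2
  have key' : pa * p * pa = p ^ 4 := Equiv.ext key
  have key2 : pa * p = p ^ 4 * pa := by
    calc pa * p = pa * p * pa * pa := by rw [mul_assoc, hpa2', mul_one]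
    _ = p ^ 4 * pa := by rw [key']
  have key3 : pa * p ^ 4 = p * pa := by
    calc pa * p ^ 4 = pa * (pa * p * pa) := by rw [key']
    _ = p * pa := by rw [← mul_assoc, ← mul_assoc, hpa2', one_mul]
  -- transfer to matrices
  have Mmul : ∀ σ τ : Equiv.Perm {i : Fin 16 // i ≠ 0},
      σ.permMatrix (ZMod 2) * τ.permMatrix (ZMod 2) = (τ * σ).permMatrix (ZMod 2) := by
    intro σ τ
    show σ.toPEquiv.toMatrix * τ.toPEquiv.toMatrix = (τ * σ).toPEquiv.toMatrix
    rw [← PEquiv.toMatrix_trans, ← Equiv.toPEquiv_trans]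
    rfl
  have Mpow : (p.permMatrix (ZMod 2)) ^ 4 = (p ^ 4).permMatrix (ZMod 2) := by
    have h2 : (p.permMatrix (ZMod 2)) ^ 2 = (p ^ 2).permMatrix (ZMod 2) := by
      rw [pow_two, Mmul, ← pow_two]
    have h44 : (4:ℕ) = 2 * 2 := rfl
    rw [h44, pow_mul, h2, pow_two, Mmul, ← pow_add]
  have main : (1 + p.permMatrix (ZMod 2) + (p.permMatrix (ZMod 2)) ^ 4) *
        pa.permMatrix (ZMod 2) =
      pa.permMatrix (ZMod 2) *
        (1 + p.permMatrix (ZMod 2) + (p.permMatrix (ZMod 2)) ^ 4) := by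
    rw [Mpow, add_mul, add_mul, Matrix.mul_add, Matrix.mul_add, one_mul,
      Matrix.mul_one, Mmul p pa, Mmul (p ^ 4) pa, Mmul pa p, Mmul pa (p ^ 4),
      key2, key3, add_right_comm]
  exact ⟨main, pa, main⟩
end

section
/- Let H be a full-rank (n−k)×n check matrix of a code C = ker H over F₂, σ₁, σ₂ n×n permutation matrices and h₁, h₂ invertible matrices with h₁H = Hσ₁ and h₂⁻ᵀH = Hσ₂. Then for the hypergraph-product check matrices H_X = [H⊗I | I⊗Hᵀ] and H_Z = [I⊗H | Hᵀ⊗I], the block-diagonal transformation (σ₁⊗σ₂) ⊕ (h₁⊗h₂) satisfies H_X·((σ₁⊗σ₂)⊕(h₁⊗h₂)) = (h₁⊗σ₂)·H_X. -/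
open Matrix Kronecker

section

variable {R : Type*} [CommRing R]

theorem transpose_mul_eq_permMatrix_mul_of_inv_transpose_mul_eq {m n : Type*} [Fintype m]
    [DecidableEq m] [Fintype n] [DecidableEq n] {H : Matrix m n R} {A : GL m R}
    {σ : Equiv.Perm n} (h : ((A⁻¹ : GL m R) : Matrix m m R)ᵀ * H = H * σ.permMatrix R) :
    Hᵀ * (A : Matrix m m R) = σ.permMatrix R * Hᵀ := by
  have hT : Hᵀ * ((A⁻¹ : GL m R) : Matrix m m R) = (σ⁻¹).permMatrix R * Hᵀ := by
    simpa [transpose_mul] using congrArg transpose h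
  calc Hᵀ * (A : Matrix m m R)
      = σ.permMatrix R * (σ⁻¹).permMatrix R * Hᵀ * (A : Matrix m m R) := by
        rw [← permMatrix_mul, inv_mul_cancel, permMatrix_one, Matrix.one_mul]
    _ = σ.permMatrix R * (Hᵀ * ((A⁻¹ : GL m R) : Matrix m m R) * (A : Matrix m m R)) := by
        rw [hT, Matrix.mul_assoc, Matrix.mul_assoc, Matrix.mul_assoc]
    _ = σ.permMatrix R * Hᵀ := by
        rw [Matrix.mul_assoc, ← Units.val_mul, inv_mul_cancel, Units.val_one, Matrix.mul_one]

theorem fromCols_kronecker_mul_fromBlocks_kronecker {m₁ n₁ m₂ n₂ : Type*}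
    [Fintype m₁] [DecidableEq m₁] [Fintype n₁] [Fintype m₂] [Fintype n₂] [DecidableEq n₂]
    (H₁ : Matrix m₁ n₁ R) (H₂ : Matrix m₂ n₂ R) {A : Matrix m₁ m₁ R} {P : Matrix n₁ n₁ R}
    {B : Matrix m₂ m₂ R} {Q : Matrix n₂ n₂ R}
    (hA : A * H₁ = H₁ * P) (hB : H₂ᵀ * B = Q * H₂ᵀ) :
    fromCols (H₁ ⊗ₖ (1 : Matrix n₂ n₂ R)) ((1 : Matrix m₁ m₁ R) ⊗ₖ H₂ᵀ) *
        fromBlocks (P ⊗ₖ Q) 0 0 (A ⊗ₖ B) =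
      (A ⊗ₖ Q) * fromCols (H₁ ⊗ₖ (1 : Matrix n₂ n₂ R)) ((1 : Matrix m₁ m₁ R) ⊗ₖ H₂ᵀ) := by
  rw [fromCols_mul_fromBlocks, mul_fromCols]
  simp only [Matrix.mul_zero, add_zero, zero_add, ← mul_kronecker_mul,
    hA, hB, Matrix.one_mul, Matrix.mul_one]

end

theorem hgp_automorphism_stabilizer_preserving_general (n m : ℕ)
    (H : Matrix (Fin m) (Fin n) (ZMod 2))
    (σ₁ σ₂ : Equiv.Perm (Fin n)) (h₁ h₂ : GL (Fin m) (ZMod 2))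
    (hh₁ : (h₁ : Matrix (Fin m) (Fin m) (ZMod 2)) * H = H * σ₁.permMatrix (ZMod 2))
    (hh₂ : ((h₂⁻¹ : GL (Fin m) (ZMod 2)) : Matrix (Fin m) (Fin m) (ZMod 2))ᵀ * H =
      H * σ₂.permMatrix (ZMod 2)) :
    Matrix.fromCols (H ⊗ₖ (1 : Matrix (Fin n) (Fin n) (ZMod 2)))
        ((1 : Matrix (Fin m) (Fin m) (ZMod 2)) ⊗ₖ Hᵀ) *
      Matrix.fromBlocks
        (σ₁.permMatrix (ZMod 2) ⊗ₖ σ₂.permMatrix (ZMod 2)) 0 0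
        ((h₁ : Matrix (Fin m) (Fin m) (ZMod 2)) ⊗ₖ
          (h₂ : Matrix (Fin m) (Fin m) (ZMod 2))) =
    ((h₁ : Matrix (Fin m) (Fin m) (ZMod 2)) ⊗ₖ σ₂.permMatrix (ZMod 2)) *
      Matrix.fromCols (H ⊗ₖ (1 : Matrix (Fin n) (Fin n) (ZMod 2)))
        ((1 : Matrix (Fin m) (Fin m) (ZMod 2)) ⊗ₖ Hᵀ) :=
  fromCols_kronecker_mul_fromBlocks_kronecker H H hh₁
    (transpose_mul_eq_permMatrix_mul_of_inv_transpose_mul_eq hh₂)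

/-- For h₁H = Hσ₁ and h₂⁻ᵀH = Hσ₂, the hypergraph-product check matrix
H_X = [H⊗I | I⊗Hᵀ] satisfies H_X·((σ₁⊗σ₂) ⊕ (h₁⊗h₂)) = (h₁⊗σ₂)·H_X. -/
theorem hgp_automorphism_stabilizer_preserving (k n m : ℕ) (hm : m = n - k)
    (H : Matrix (Fin m) (Fin n) (ZMod 2))
    (hHfull : LinearIndependent (ZMod 2) (fun i => H i))
    (σ₁ σ₂ : Equiv.Perm (Fin n)) (h₁ h₂ : GL (Fin m) (ZMod 2))
    (hh₁ : (h₁ : Matrix (Fin m) (Fin m) (ZMod 2)) * H = H * σ₁.permMatrix (ZMod 2))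
    (hh₂ : ((h₂⁻¹ : GL (Fin m) (ZMod 2)) : Matrix (Fin m) (Fin m) (ZMod 2))ᵀ * H =
      H * σ₂.permMatrix (ZMod 2)) :
    Matrix.fromCols (H ⊗ₖ (1 : Matrix (Fin n) (Fin n) (ZMod 2)))
        ((1 : Matrix (Fin m) (Fin m) (ZMod 2)) ⊗ₖ Hᵀ) *
      Matrix.fromBlocks
        (σ₁.permMatrix (ZMod 2) ⊗ₖ σ₂.permMatrix (ZMod 2)) 0 0
        ((h₁ : Matrix (Fin m) (Fin m) (ZMod 2)) ⊗ₖ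
          (h₂ : Matrix (Fin m) (Fin m) (ZMod 2))) =
    ((h₁ : Matrix (Fin m) (Fin m) (ZMod 2)) ⊗ₖ σ₂.permMatrix (ZMod 2)) *
      Matrix.fromCols (H ⊗ₖ (1 : Matrix (Fin n) (Fin n) (ZMod 2)))
        ((1 : Matrix (Fin m) (Fin m) (ZMod 2)) ⊗ₖ Hᵀ) :=
  hgp_automorphism_stabilizer_preserving_general n m H σ₁ σ₂ h₁ h₂ hh₁ hh₂
end
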